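/- Let ε > 0 and let (d_n, k_n) be a sequence of admissible dimension pairs with d_n → ∞ and liminf_{n→∞} k_n/d_n > 1/2. Then J(d_n, k_n, ε) → 1 as n → ∞, where J(d,k,ε) := ( ∫_{σ_{d,k} ε}^{1} x^{1−(d−1)/(k−1)} (1 − x^{2/(k−1)})^{(d−k)/2 − 1} dx ) / ( ∫_0^1 x^{1−(d−1)/(k−1)} (1 − x^{2/(k−1)})^{(d−k)/2 − 1} dx ), with the convention that the numerator's integral is over the (possibly empty) interval (min{σ_{d,k} ε, 1}, 1). -/

import Mathlib

/-!
The integrand of `J` is `x ^ q * (1 - x ^ r) ^ b` with `q = 1 - (d - 1)/(k - 1) > -1`,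
`r = 2/(k - 1)` and `b = (d - k)/2 - 1`, and `1 - J` is the share of its integral carried by
`(0, x₀)`, `x₀ = min (σ ε) 1`. Splitting off the factor `x ^ ((1 + q)/2) ≤ x₀ ^ ((1 + q)/2)` leaves the
kernel with exponent `(q - 1)/2`, whose integral the substitution `x = y²` bounds by `2 ^ (b + 2)`
times the original one; hence `1 - J ≤ 2 ^ (b + 2) x₀ ^ ((1 + q)/2)`.

Log-convexity of `Γ` gives `Γ(α + β) ≥ (α - 1) ^ β Γ(α)`, i.e. `σ ≤ (π/(α - 1)) ^ (β/2)` with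
`α = (2k - d - 1)/2` and `β = (d - k)/2`. Once `k/d ≥ 1/2 + δ` we have `α - 1 ≥ δ d - 3/2` and
`(1 + q)/2 ≥ δ/2`, and the bound becomes `2 max(1, ε) (4 (π/(δ d - 3/2)) ^ (δ/2)) ^ (1/4) → 0`.
-/

open MeasureTheory Filter

/-- `σ_{d,k} > 0` defined by `σ_{d,k}² = π^{(d−k)/2} Γ((2k−d−1)/2)/Γ((k−1)/2)`. -/
noncomputable def sigmaHyp (d k : ℕ) : ℝ :=
  Real.sqrt (Real.pi ^ (((d : ℝ) - k) / 2) * Real.Gamma ((2 * (k : ℝ) - d - 1) / 2) /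
    Real.Gamma (((k : ℝ) - 1) / 2))

/-- The fraction `J(d,k,ε)` of the second moment of the Lévy measure `ν_{d,k}` carried by
`{x : |x| > σ_{d,k} ε}`; the numerator is an integral over `(min(σ_{d,k} ε, 1), 1)`. -/
noncomputable def Jfrac (d k : ℕ) (ε : ℝ) : ℝ :=
  (∫ x in Set.Ioo (min (sigmaHyp d k * ε) 1) 1,
      x ^ (1 - ((d : ℝ) - 1) / ((k : ℝ) - 1)) *
        (1 - x ^ (2 / ((k : ℝ) - 1))) ^ (((d : ℝ) - k) / 2 - 1)) /
    (∫ x in Set.Ioo (0 : ℝ) 1,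
      x ^ (1 - ((d : ℝ) - 1) / ((k : ℝ) - 1)) *
        (1 - x ^ (2 / ((k : ℝ) - 1))) ^ (((d : ℝ) - k) / 2 - 1))

open Set

namespace Real

lemma rpow_mul_Gamma_le_Gamma_add {x s : ℝ} (hx : 1 < x) (hs : 0 ≤ s) :
    (x - 1) ^ s * Gamma x ≤ Gamma (x + s) := by
  rcases hs.eq_or_lt with rfl | hs
  · simp
  have hΓx : 0 < Gamma x := Gamma_pos_of_pos (by linarith)
  have hlog : log (Gamma x) = log (x - 1) + log (Gamma (x - 1)) := by
    rw [← log_mul (by linarith) (Gamma_pos_of_pos (by linarith)).ne', ← Gamma_add_one (by linarith),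
      sub_add_cancel]
  -- slopes of the convex `log ∘ Gamma` increase, and the one on `[x - 1, x]` is `log (x - 1)`
  have hslope := convexOn_log_Gamma.slope_mono_adjacent (x := x - 1) (y := x) (z := x + s)
    (mem_Ioi.2 (by linarith)) (mem_Ioi.2 (by linarith)) (by linarith) (by linarith)
  simp only [Function.comp_apply, sub_sub_cancel, div_one, add_sub_cancel_left, hlog,
    add_sub_cancel_right, le_div_iff₀ hs] at hslope
  rw [← exp_log (Gamma_pos_of_pos (by linarith : 0 < x + s)), rpow_def_of_pos (by linarith),
    ← exp_log hΓx, ← exp_add, hlog]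
  exact exp_le_exp.2 (by linarith)

end Real

lemma integrableOn_rpow_mul_one_sub_rpow {q b : ℝ} (hq : -1 < q) (hb : -1 < b) :
    IntegrableOn (fun x : ℝ => x ^ q * (1 - x) ^ b) (Ioo 0 1) := by
  have h := Complex.betaIntegral_convergent (u := q + 1) (v := b + 1) (by simp; linarith)
    (by simp; linarith)
  rw [intervalIntegrable_iff_integrableOn_Ioo_of_le zero_le_one] at h
  refine Integrable.congr h.norm ?_
  filter_upwards [ae_restrict_mem measurableSet_Ioo] with x hx
  have h1x : ((1 - x : ℝ) : ℂ) = 1 - (x : ℂ) := by push_cast; ring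
  rw [add_sub_cancel_right, add_sub_cancel_right, norm_mul, ← h1x,
    Complex.norm_cpow_eq_rpow_re_of_pos hx.1,
    Complex.norm_cpow_eq_rpow_re_of_pos (by linarith [hx.2])]
  simp

lemma mul_one_sub_le_one_sub_rpow {x r : ℝ} (hx : 0 ≤ x) (hr0 : 0 ≤ r) (hr1 : r ≤ 1) :
    r * (1 - x) ≤ 1 - x ^ r := by
  have h := rpow_one_add_le_one_add_mul_self (s := x - 1) (by linarith) hr0 hr1
  rw [add_sub_cancel] at h
  linarith

noncomputable def betaKernel (q r b x : ℝ) : ℝ := x ^ q * (1 - x ^ r) ^ b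

section BetaKernel

variable {q r b : ℝ}

lemma betaKernel_nonneg {x : ℝ} (hx0 : 0 ≤ x) (hx1 : x ≤ 1) (hr : 0 ≤ r) :
    0 ≤ betaKernel q r b x :=
  mul_nonneg (Real.rpow_nonneg hx0 q)
    (Real.rpow_nonneg (by linarith [Real.rpow_le_one hx0 hx1 hr]) b)

lemma betaKernel_nonneg_ae (hr : 0 ≤ r) : 0 ≤ᵐ[volume.restrict (Ioo 0 1)] betaKernel q r b := by
  filter_upwards [ae_restrict_mem measurableSet_Ioo] with x hx
  exact betaKernel_nonneg hx.1.le hx.2.le hr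

lemma measurable_betaKernel : Measurable (betaKernel q r b) := by
  unfold betaKernel; fun_prop

lemma betaKernel_le {x : ℝ} (hx : x ∈ Ioo 0 1) (hr0 : 0 < r) (hr1 : r ≤ 1) :
    betaKernel q r b x ≤ r ^ min b 0 * (x ^ q * (1 - x) ^ min b 0) := by
  have hxr : x ^ r < 1 := Real.rpow_lt_one hx.1.le hx.2 hr0
  have hfactor : (1 - x ^ r) ^ b ≤ (r * (1 - x)) ^ min b 0 := by
    rcases le_or_gt 0 b with hb | hb
    · rw [min_eq_right hb, Real.rpow_zero]
      exact Real.rpow_le_one (by linarith) (by linarith [Real.rpow_nonneg hx.1.le r]) hb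
    · rw [min_eq_left hb.le]
      exact Real.rpow_le_rpow_of_nonpos (mul_pos hr0 (by linarith [hx.2]))
        (mul_one_sub_le_one_sub_rpow hx.1.le hr0.le hr1) hb.le
  rw [Real.mul_rpow hr0.le (by linarith [hx.2])] at hfactor
  calc betaKernel q r b x ≤ x ^ q * (r ^ min b 0 * (1 - x) ^ min b 0) :=
        mul_le_mul_of_nonneg_left hfactor (Real.rpow_nonneg hx.1.le q)
    _ = _ := by ring

lemma integrableOn_betaKernel (hq : -1 < q) (hr0 : 0 < r) (hr1 : r ≤ 1) (hb : -1 < b) :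
    IntegrableOn (betaKernel q r b) (Ioo 0 1) := by
  have hdom := (integrableOn_rpow_mul_one_sub_rpow hq (lt_min hb neg_one_lt_zero)).const_mul
    (r ^ min b 0)
  refine Integrable.mono' hdom measurable_betaKernel.aestronglyMeasurable ?_
  filter_upwards [ae_restrict_mem measurableSet_Ioo] with x hx
  rw [Real.norm_of_nonneg (betaKernel_nonneg hx.1.le hx.2.le hr0.le)]
  exact betaKernel_le hx hr0 hr1

lemma one_add_rpow_le_two_rpow {t : ℝ} (ht0 : 0 ≤ t) (ht1 : t ≤ 1) (hb : -1 ≤ b) :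
    (1 + t) ^ b ≤ 2 ^ (b + 1) := by
  rcases le_or_gt 0 b with hb0 | hb0
  · calc (1 + t) ^ b ≤ 2 ^ b := Real.rpow_le_rpow (by linarith) (by linarith) hb0
      _ ≤ 2 ^ (b + 1) := Real.rpow_le_rpow_of_exponent_le (by norm_num) (by linarith)
  · calc (1 + t) ^ b ≤ 1 := Real.rpow_le_one_of_one_le_of_nonpos (by linarith) hb0.le
      _ ≤ 2 ^ (b + 1) := Real.one_le_rpow (by norm_num) (by linarith)

lemma two_mul_mul_betaKernel_sq_le {y : ℝ} (hy : y ∈ Ioo 0 1) (hr : 0 < r) (hb : -1 < b) :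
    2 * y * betaKernel q r b (y ^ 2) ≤ 2 ^ (b + 2) * betaKernel (2 * q + 1) r b y := by
  obtain ⟨hy0, hy1⟩ := hy
  have hyr0 : 0 ≤ y ^ r := Real.rpow_nonneg hy0.le r
  have hyr1 : y ^ r ≤ 1 := Real.rpow_le_one hy0.le hy1.le hr.le
  have hsq : ∀ s : ℝ, (y ^ 2) ^ s = y ^ (2 * s) := fun s => by
    rw [← Real.rpow_natCast, ← Real.rpow_mul hy0.le, Nat.cast_ofNat]
  have hfactor : (1 - (y ^ 2) ^ r) ^ b = (1 - y ^ r) ^ b * (1 + y ^ r) ^ b := by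
    rw [← Real.mul_rpow (by linarith) (by linarith), hsq, mul_comm 2 r, Real.rpow_mul hy0.le,
      Real.rpow_two]
    congr 1
    ring
  calc 2 * y * betaKernel q r b (y ^ 2)
      = 2 * (1 + y ^ r) ^ b * betaKernel (2 * q + 1) r b y := by
        rw [betaKernel, betaKernel, hfactor, hsq, Real.rpow_add hy0, Real.rpow_one]
        ring
    _ ≤ 2 * 2 ^ (b + 1) * betaKernel (2 * q + 1) r b y := by
        gcongr
        · exact betaKernel_nonneg hy0.le hy1.le hr.le
        · exact one_add_rpow_le_two_rpow hyr0 hyr1 hb.le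
    _ = 2 ^ (b + 2) * betaKernel (2 * q + 1) r b y := by
        rw [show b + 2 = b + 1 + 1 by ring, Real.rpow_add_one two_ne_zero (b + 1)]
        ring

lemma integral_betaKernel_le_two_rpow_mul (hq : -1 < q) (hr0 : 0 < r) (hr1 : r ≤ 1)
    (hb : -1 < b) :
    ∫ x in Ioo 0 1, betaKernel q r b x ≤
      2 ^ (b + 2) * ∫ x in Ioo 0 1, betaKernel (2 * q + 1) r b x := by
  have hsq : StrictMonoOn (fun y : ℝ => y ^ 2) (Icc 0 1) :=
    (pow_left_strictMonoOn₀ two_ne_zero).mono fun y hy => hy.1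
  have himage : (fun y : ℝ => y ^ 2) '' Ioo 0 1 = Ioo 0 1 := by
    rw [ContinuousOn.image_Ioo_of_strictMonoOn zero_le_one (by fun_prop) hsq]
    norm_num
  have hderiv : ∀ y ∈ Ioo (0 : ℝ) 1, HasDerivWithinAt (fun y => y ^ 2) (2 * y) (Ioo 0 1) y :=
    fun y _ => by simpa using (hasDerivAt_pow 2 y).hasDerivWithinAt
  rw [← himage, integral_image_eq_integral_abs_deriv_smul measurableSet_Ioo hderiv
    (hsq.injOn.mono Ioo_subset_Icc_self), himage, ← integral_const_mul]
  refine integral_mono_of_nonneg ?_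
    ((integrableOn_betaKernel (by linarith) hr0 hr1 hb).const_mul _) ?_
  all_goals filter_upwards [ae_restrict_mem measurableSet_Ioo] with y hy
  · exact smul_nonneg (abs_nonneg _)
      (betaKernel_nonneg (by positivity) (by nlinarith [hy.1, hy.2]) hr0.le)
  · rw [abs_of_pos (by linarith [hy.1]), smul_eq_mul]
    exact two_mul_mul_betaKernel_sq_le hy hr0 hb

lemma setIntegral_Ioo_betaKernel_le {x₀ : ℝ} (hx₀ : x₀ ∈ Icc 0 1) (hq : -1 < q) (hr0 : 0 < r)
    (hr1 : r ≤ 1) (hb : -1 < b) :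
    ∫ x in Ioo 0 x₀, betaKernel q r b x ≤
      2 ^ (b + 2) * x₀ ^ ((1 + q) / 2) * ∫ x in Ioo 0 1, betaKernel q r b x := by
  set q' := (q - 1) / 2 with hq'def
  have hq' : -1 < q' := by simp only [q']; linarith
  have hρ : 0 ≤ (1 + q) / 2 := by linarith
  have hsub : Ioo 0 x₀ ⊆ Ioo (0 : ℝ) 1 := Ioo_subset_Ioo_right hx₀.2
  have hint := integrableOn_betaKernel hq' hr0 hr1 hb
  have hpointwise : ∀ x ∈ Ioo 0 x₀,
      betaKernel q r b x ≤ x₀ ^ ((1 + q) / 2) * betaKernel q' r b x := by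
    intro x hx
    have hsplit : betaKernel q r b x = x ^ ((1 + q) / 2) * betaKernel q' r b x := by
      rw [betaKernel, betaKernel, ← mul_assoc, ← Real.rpow_add hx.1, hq'def]
      ring_nf
    rw [hsplit]
    exact mul_le_mul_of_nonneg_right (Real.rpow_le_rpow hx.1.le hx.2.le hρ)
      (betaKernel_nonneg hx.1.le (hx.2.le.trans hx₀.2) hr0.le)
  calc ∫ x in Ioo 0 x₀, betaKernel q r b x
      ≤ ∫ x in Ioo 0 x₀, x₀ ^ ((1 + q) / 2) * betaKernel q' r b x := by
        refine integral_mono_of_nonneg ?_ ((hint.mono_set hsub).const_mul _) ?_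
        all_goals filter_upwards [ae_restrict_mem measurableSet_Ioo] with x hx
        · exact betaKernel_nonneg hx.1.le (hx.2.le.trans hx₀.2) hr0.le
        · exact hpointwise x hx
    _ ≤ x₀ ^ ((1 + q) / 2) * ∫ x in Ioo 0 1, betaKernel q' r b x := by
        rw [integral_const_mul]
        exact mul_le_mul_of_nonneg_left
          (setIntegral_mono_set hint (betaKernel_nonneg_ae hr0.le) hsub.eventuallyLE)
          (Real.rpow_nonneg hx₀.1 _)
    _ ≤ x₀ ^ ((1 + q) / 2) * (2 ^ (b + 2) * ∫ x in Ioo 0 1, betaKernel q r b x) := by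
        refine mul_le_mul_of_nonneg_left ?_ (Real.rpow_nonneg hx₀.1 _)
        simpa [q', show 2 * ((q - 1) / 2) + 1 = q by ring] using
          integral_betaKernel_le_two_rpow_mul hq' hr0 hr1 hb
    _ = _ := by ring

lemma integral_betaKernel_pos (hq : -1 < q) (hr0 : 0 < r) (hr1 : r ≤ 1) (hb : -1 < b) :
    0 < ∫ x in Ioo 0 1, betaKernel q r b x := by
  rw [setIntegral_pos_iff_support_of_nonneg_ae (betaKernel_nonneg_ae hr0.le)
    (integrableOn_betaKernel hq hr0 hr1 hb)]
  have hsupp : Ioo 0 1 ⊆ Function.support (betaKernel q r b) := fun x hx =>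
    (mul_pos (Real.rpow_pos_of_pos hx.1 q)
      (Real.rpow_pos_of_pos (by linarith [Real.rpow_lt_one hx.1.le hx.2 hr0]) b)).ne'
  simp [inter_eq_right.2 hsupp]

lemma setIntegral_Ioo_betaKernel_add {x₀ : ℝ} (hx₀ : x₀ ∈ Icc 0 1) (hq : -1 < q) (hr0 : 0 < r)
    (hr1 : r ≤ 1) (hb : -1 < b) :
    (∫ x in Ioo 0 x₀, betaKernel q r b x) + ∫ x in Ioo x₀ 1, betaKernel q r b x =
      ∫ x in Ioo 0 1, betaKernel q r b x := by
  have hint : IntervalIntegrable (betaKernel q r b) volume 0 1 :=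
    (intervalIntegrable_iff_integrableOn_Ioo_of_le zero_le_one).2
      (integrableOn_betaKernel hq hr0 hr1 hb)
  simp only [← integral_Ioc_eq_integral_Ioo, ← intervalIntegral.integral_of_le hx₀.1,
    ← intervalIntegral.integral_of_le hx₀.2, ← intervalIntegral.integral_of_le zero_le_one]
  exact intervalIntegral.integral_add_adjacent_intervals
    (hint.mono_set (uIcc_subset_uIcc left_mem_uIcc (mem_uIcc_of_le hx₀.1 hx₀.2)))
    (hint.mono_set (uIcc_subset_uIcc (mem_uIcc_of_le hx₀.1 hx₀.2) right_mem_uIcc))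

lemma betaKernel_tail_ratio_mem_Icc {x₀ : ℝ} (hx₀ : x₀ ∈ Icc 0 1) (hq : -1 < q) (hr0 : 0 < r)
    (hr1 : r ≤ 1) (hb : -1 < b) :
    (∫ x in Ioo x₀ 1, betaKernel q r b x) / ∫ x in Ioo 0 1, betaKernel q r b x ∈
      Icc (1 - 2 ^ (b + 2) * x₀ ^ ((1 + q) / 2)) 1 := by
  have hpos := integral_betaKernel_pos hq hr0 hr1 hb
  have hadd := setIntegral_Ioo_betaKernel_add hx₀ hq hr0 hr1 hb
  have hhead := setIntegral_Ioo_betaKernel_le hx₀ hq hr0 hr1 hb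
  have hhead_nonneg : 0 ≤ ∫ x in Ioo 0 x₀, betaKernel q r b x :=
    setIntegral_nonneg measurableSet_Ioo fun x hx =>
      betaKernel_nonneg hx.1.le (hx.2.le.trans hx₀.2) hr0.le
  rw [mem_Icc, le_div_iff₀ hpos, div_le_one hpos]
  constructor <;> linarith

end BetaKernel

lemma two_rpow_mul_rpow_le {β ρ δ s t : ℝ} (hβ : 1 / 2 ≤ β) (hδ : 0 < δ) (hρ : δ / 2 ≤ ρ)
    (ht0 : 0 < t) (ht1 : t ≤ 1) (hs0 : 0 ≤ s) (hs : s ≤ t ^ (β / 2)) (hW : 4 * t ^ (δ / 2) ≤ 1) :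
    2 ^ (β + 1) * s ^ ρ ≤ 2 * (4 * t ^ (δ / 2)) ^ (1 / 4 : ℝ) := by
  have hρ0 : 0 ≤ ρ := by linarith
  have htρ : t ^ ρ ≤ t ^ (δ / 2) := Real.rpow_le_rpow_of_exponent_ge ht0 ht1 hρ
  have h4 : (4 : ℝ) ^ (β / 2) = 2 ^ β := by
    rw [show (4 : ℝ) = 2 ^ (2 : ℝ) by norm_num, ← Real.rpow_mul zero_le_two]
    ring_nf
  calc 2 ^ (β + 1) * s ^ ρ ≤ 2 ^ (β + 1) * (t ^ (β / 2)) ^ ρ := by gcongr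
    _ = 2 * (4 * t ^ ρ) ^ (β / 2) := by
        rw [Real.mul_rpow zero_le_four (Real.rpow_nonneg ht0.le ρ), h4, ← Real.rpow_mul ht0.le,
          ← Real.rpow_mul ht0.le, Real.rpow_add_one two_ne_zero, mul_comm ρ]
        ring
    _ ≤ 2 * (4 * t ^ (δ / 2)) ^ (β / 2) := by gcongr
    _ ≤ 2 * (4 * t ^ (δ / 2)) ^ (1 / 4 : ℝ) :=
        mul_le_mul_of_nonneg_left (Real.rpow_le_rpow_of_exponent_ge'
          (mul_nonneg zero_le_four (Real.rpow_nonneg ht0.le _)) hW (by norm_num) (by linarith))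
          zero_le_two

lemma sigmaHyp_le {d k : ℕ} (hkd : k ≤ d) (hα : 1 < (2 * (k : ℝ) - d - 1) / 2) :
    sigmaHyp d k ≤ (Real.pi / ((2 * (k : ℝ) - d - 1) / 2 - 1)) ^ (((d : ℝ) - k) / 4) := by
  set α := (2 * (k : ℝ) - d - 1) / 2
  set β := ((d : ℝ) - k) / 2
  have hβ : 0 ≤ β := by simp only [β]; linarith [(Nat.cast_le (α := ℝ)).2 hkd]
  have hΓ : (α - 1) ^ β * Real.Gamma α ≤ Real.Gamma (((k : ℝ) - 1) / 2) := by
    convert Real.rpow_mul_Gamma_le_Gamma_add hα hβ using 2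
    simp only [α, β]; ring
  have hΓα : 0 < Real.Gamma α := Real.Gamma_pos_of_pos (by linarith)
  have hΓk : 0 < Real.Gamma (((k : ℝ) - 1) / 2) :=
    Real.Gamma_pos_of_pos (by linarith [show ((k : ℝ) - 1) / 2 = α + β by simp only [α, β]; ring])
  have hα1 : 0 < α - 1 := by linarith
  calc sigmaHyp d k ≤ Real.sqrt ((Real.pi / (α - 1)) ^ β) := by
        refine Real.sqrt_le_sqrt ?_
        rw [Real.div_rpow Real.pi_pos.le hα1.le, div_le_div_iff₀ hΓk (by positivity)]
        calc Real.pi ^ β * Real.Gamma α * (α - 1) ^ β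
            = Real.pi ^ β * ((α - 1) ^ β * Real.Gamma α) := by ring
          _ ≤ Real.pi ^ β * Real.Gamma (((k : ℝ) - 1) / 2) := by gcongr
    _ = (Real.pi / (α - 1)) ^ (((d : ℝ) - k) / 4) := by
        rw [Real.sqrt_eq_rpow, ← Real.rpow_mul (by positivity)]
        simp only [β]; ring_nf

lemma Jfrac_mem_Icc {d k : ℕ} {ε : ℝ} (hε : 0 ≤ ε) (hkd : k < d) (hdk : d + 1 < 2 * k) :
    Jfrac d k ε ∈ Icc (1 - 2 ^ (((d : ℝ) - k) / 2 + 1) *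
      (sigmaHyp d k * ε) ^ ((2 * (k : ℝ) - d - 1) / (2 * ((k : ℝ) - 1)))) 1 := by
  have hk : (3 : ℝ) ≤ k := by exact_mod_cast (by omega : 3 ≤ k)
  have hkd' : (k : ℝ) + 1 ≤ d := by exact_mod_cast hkd
  have hdk' : (d : ℝ) + 1 < 2 * k := by exact_mod_cast hdk
  have hx₀ : min (sigmaHyp d k * ε) 1 ∈ Icc 0 1 :=
    ⟨le_min (mul_nonneg (Real.sqrt_nonneg _) hε) zero_le_one, min_le_right _ _⟩
  have hq : -1 < 1 - ((d : ℝ) - 1) / ((k : ℝ) - 1) := by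
    rw [neg_lt_sub_iff_lt_add, div_lt_iff₀ (by linarith)]; linarith
  have hr0 : 0 < 2 / ((k : ℝ) - 1) := div_pos two_pos (by linarith)
  have hr1 : 2 / ((k : ℝ) - 1) ≤ 1 := by rw [div_le_one (by linarith)]; linarith
  have hb : -1 < ((d : ℝ) - k) / 2 - 1 := by linarith
  have hρ : (1 + (1 - ((d : ℝ) - 1) / ((k : ℝ) - 1))) / 2 =
      (2 * (k : ℝ) - d - 1) / (2 * ((k : ℝ) - 1)) := by
    field_simp [show (k : ℝ) - 1 ≠ 0 by linarith]; ring
  -- `Jfrac d k ε` unfolds to this tail ratio of `betaKernel q r b` at `x₀ = min (σ ε) 1`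
  obtain ⟨hlow, hup⟩ := betaKernel_tail_ratio_mem_Icc hx₀ hq hr0 hr1 hb
  refine ⟨le_trans ?_ hlow, hup⟩
  have hρ0 : 0 ≤ (2 * (k : ℝ) - d - 1) / (2 * ((k : ℝ) - 1)) :=
    div_nonneg (by linarith) (by linarith)
  rw [hρ, show ((d : ℝ) - k) / 2 - 1 + 2 = ((d : ℝ) - k) / 2 + 1 by ring]
  exact sub_le_sub_left (mul_le_mul_of_nonneg_left
    (Real.rpow_le_rpow hx₀.1 (min_le_left _ _) hρ0) (by positivity)) 1

lemma two_rpow_mul_rpow_sigmaHyp_le {d k : ℕ} {δ ε : ℝ} (hε : 0 < ε) (hδ : 0 < δ) (hkd : k < d)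
    (hratio : 1 / 2 + δ ≤ (k : ℝ) / d) (hlarge : Real.pi + 3 / 2 ≤ δ * d)
    (hW : 4 * (Real.pi / (δ * d - 3 / 2)) ^ (δ / 2) ≤ 1) :
    2 ^ (((d : ℝ) - k) / 2 + 1) *
        (sigmaHyp d k * ε) ^ ((2 * (k : ℝ) - d - 1) / (2 * ((k : ℝ) - 1))) ≤
      2 * max 1 ε * (4 * (Real.pi / (δ * d - 3 / 2)) ^ (δ / 2)) ^ (1 / 4 : ℝ) := by
  have hπ := Real.pi_pos
  have hkd' : (k : ℝ) + 1 ≤ d := by exact_mod_cast hkd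
  have hk : (1 / 2 + δ) * d ≤ k := (le_div_iff₀ (by linarith [k.cast_nonneg (α := ℝ)])).1 hratio
  set ρ := (2 * (k : ℝ) - d - 1) / (2 * ((k : ℝ) - 1))
  set t := Real.pi / (δ * d - 3 / 2)
  have ht0 : 0 < t := div_pos hπ (by linarith)
  have ht1 : t ≤ 1 := by rw [div_le_one (by linarith)]; linarith
  have hσ0 : 0 ≤ sigmaHyp d k := Real.sqrt_nonneg _
  have hσ : sigmaHyp d k ≤ t ^ (((d : ℝ) - k) / 2 / 2) := by
    calc sigmaHyp d k
        ≤ (Real.pi / ((2 * (k : ℝ) - d - 1) / 2 - 1)) ^ (((d : ℝ) - k) / 4) :=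
          sigmaHyp_le hkd.le (by linarith)
      _ ≤ t ^ (((d : ℝ) - k) / 2 / 2) := by
          rw [show ((d : ℝ) - k) / 2 / 2 = ((d : ℝ) - k) / 4 by ring]
          refine Real.rpow_le_rpow (div_nonneg hπ.le (by linarith))
            (div_le_div_of_nonneg_left hπ.le (by linarith) (by linarith)) (by linarith)
  have hρδ : δ / 2 ≤ ρ := by
    rw [le_div_iff₀ (by linarith)]
    nlinarith [mul_le_mul_of_nonneg_left (show (k : ℝ) - 1 ≤ d by linarith) hδ.le]
  have hρ1 : ρ ≤ 1 := by rw [div_le_one (by linarith)]; linarith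
  have hερ : ε ^ ρ ≤ max 1 ε :=
    calc ε ^ ρ ≤ max 1 ε ^ ρ := Real.rpow_le_rpow hε.le (le_max_right _ _) (by linarith)
      _ ≤ max 1 ε ^ (1 : ℝ) := Real.rpow_le_rpow_of_exponent_le (le_max_left _ _) hρ1
      _ = max 1 ε := Real.rpow_one _
  calc 2 ^ (((d : ℝ) - k) / 2 + 1) * (sigmaHyp d k * ε) ^ ρ
      = 2 ^ (((d : ℝ) - k) / 2 + 1) * sigmaHyp d k ^ ρ * ε ^ ρ := by
        rw [Real.mul_rpow hσ0 hε.le, mul_assoc]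
    _ ≤ 2 * (4 * t ^ (δ / 2)) ^ (1 / 4 : ℝ) * max 1 ε :=
        mul_le_mul (two_rpow_mul_rpow_le (by linarith) hδ hρδ ht0 ht1 hσ0 hσ hW) hερ
          (Real.rpow_nonneg hε.le _) (by positivity)
    _ = 2 * max 1 ε * (4 * t ^ (δ / 2)) ^ (1 / 4 : ℝ) := by ring

lemma exists_pos_eventually_add_le_of_lt_liminf {ι : Type*} {l : Filter ι} {u : ι → ℝ} {a : ℝ}
    (h : (a : EReal) < liminf (fun i => (u i : EReal)) l) : ∃ δ > 0, ∀ᶠ i in l, a + δ ≤ u i := by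
  obtain ⟨c, hac, hc⟩ := EReal.exists_between_coe_real h
  refine ⟨c - a, sub_pos.2 (EReal.coe_lt_coe_iff.1 hac), ?_⟩
  filter_upwards [eventually_lt_of_lt_liminf hc] with i hi
  linarith [EReal.coe_lt_coe_iff.1 hi]

/-- If `(d_n,k_n)` is admissible, `d_n → ∞` and `liminf k_n/d_n > 1/2`,
then `J(d_n,k_n,ε) → 1` for every `ε > 0`. -/
theorem Jfrac_tendsto_one_of_liminf_ratio_gt_half (ε : ℝ) (hε : 0 < ε) (d k : ℕ → ℕ)
    (hadm : ∀ n, 1 ≤ k n ∧ k n + 1 ≤ d n ∧ d n + 1 < 2 * k n)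
    (hd : Tendsto d atTop atTop)
    (hliminf : (1 / 2 : EReal) <
      Filter.liminf (fun n => (((k n : ℝ) / (d n : ℝ) : ℝ) : EReal)) atTop) :
    Tendsto (fun n => Jfrac (d n) (k n) ε) atTop (nhds 1) := by
  obtain ⟨δ, hδ, hratio⟩ := exists_pos_eventually_add_le_of_lt_liminf (a := 1 / 2)
    (by exact_mod_cast hliminf)
  set W : ℕ → ℝ := fun n => 4 * (Real.pi / (δ * d n - 3 / 2)) ^ (δ / 2)
  have hδd : Tendsto (fun n => δ * (d n : ℝ)) atTop atTop :=
    (tendsto_natCast_atTop_atTop.comp hd).const_mul_atTop hδ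
  have hW : Tendsto W atTop (nhds 0) := by
    have h : Tendsto (fun n => Real.pi / (δ * d n - 3 / 2)) atTop (nhds 0) :=
      tendsto_const_nhds.div_atTop (by
        simpa only [sub_eq_add_neg] using tendsto_atTop_add_const_right _ (-(3 / 2)) hδd)
    simpa [W, Real.zero_rpow (by positivity : δ / 2 ≠ 0)] using
      ((h.rpow_const (p := δ / 2) (Or.inr (by positivity))).const_mul 4)
  have hlower : Tendsto (fun n => 1 - 2 * max 1 ε * W n ^ (1 / 4 : ℝ)) atTop (nhds 1) := by
    simpa using
      ((hW.rpow_const (p := 1 / 4) (Or.inr (by norm_num))).const_mul (2 * max 1 ε)).const_sub 1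
  refine tendsto_of_tendsto_of_tendsto_of_le_of_le' hlower tendsto_const_nhds ?_ ?_
  · filter_upwards [hratio, hδd.eventually_ge_atTop (Real.pi + 3 / 2),
      hW.eventually (eventually_le_nhds one_pos)] with n hr hl hw
    obtain ⟨-, hkd, hdk⟩ := hadm n
    have := two_rpow_mul_rpow_sigmaHyp_le hε hδ hkd hr hl hw
    exact le_trans (by linarith) (Jfrac_mem_Icc hε.le hkd hdk).1
  · exact Eventually.of_forall fun n => (Jfrac_mem_Icc hε.le (hadm n).2.1 (hadm n).2.2).2
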